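/- Let H be an entropy and n ∈ ℕ. Then: (i) H is continuous on P_{>0}(n) and, for every p ∈ P(n) and every sequence {p_k} ⊂ P_{>0}(n) with p_k → p, one has liminf_{k→∞} H(p_k) ≥ H(p); (ii) for all p ∈ P(n): −log(max_{i∈[n]} p_i) ≤ H(p) ≤ log |supp(p)|, where |supp(p)| is the number of nonzero entries of p. -/

import Mathlib

/-!
Everything follows by comparing with uniform vectors under Kronecker products. Majorisation
between uniform vectors and additivity force `H(uₙ) = log₂ n`. Then `p` majorises the uniform
vector on its support, while `p ⊗ uₘ` is majorised by the uniform vector on `⌊m / maxᵢ pᵢ⌋`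
outcomes; letting `m → ∞` gives the two bounds.

For semicontinuity, let `μ` be the smallest nonzero entry of `p` and suppose `q ≤ p + (c - 1) μ`
entrywise. Then `p ⊗ uₘ` majorises `q ⊗ u⌈cm⌉`: every choice of `k` entries of the latter is a
fractional choice of rows of `q`, which a `c` times larger fractional choice of rows of `p`
outweighs, and the `k` largest entries of a vector beat every fractional choice of total weight
`k`. Hence `H(p) ≤ H(q) + log₂ c`, which is lower semicontinuity at every `p` and, with the roles
of `p` and `q` exchanged, upper semicontinuity where `p > 0`.
-/

open scoped BigOperators ENNReal

/-- A probability vector: nonnegative entries summing to 1. -/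
def IsProbVec {n : ℕ} (p : Fin n → ℝ) : Prop :=
  (∀ i, 0 ≤ p i) ∧ ∑ i, p i = 1

/-- The uniform probability vector on `n` outcomes. -/
noncomputable def uniform (n : ℕ) : Fin n → ℝ := fun _ => (n : ℝ)⁻¹

/-- Kronecker (tensor) product of two vectors. -/
noncomputable def kron {n m : ℕ} (p : Fin n → ℝ) (q : Fin m → ℝ) : Fin (n * m) → ℝ :=
  fun i => p (finProdFinEquiv.symm i).1 * q (finProdFinEquiv.symm i).2

/-- Sum of the `k` largest entries (for vectors with nonnegative entries):
the supremum of sums over subsets of at most `k` indices. -/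
noncomputable def maxPartialSum {n : ℕ} (p : Fin n → ℝ) (k : ℕ) : ℝ :=
  sSup { x | ∃ s : Finset (Fin n), s.card ≤ k ∧ ∑ i ∈ s, p i = x }

/-- `p` majorises `q`: every partial sum of the `k` largest entries of `p`
dominates that of `q` (entries beyond a vector's length count as 0). -/
def Majorizes {n m : ℕ} (p : Fin n → ℝ) (q : Fin m → ℝ) : Prop :=
  ∀ k : ℕ, maxPartialSum q k ≤ maxPartialSum p k

/-- A channel: an `n × m` row-stochastic matrix. -/
def IsStochastic {n m : ℕ} (W : Matrix (Fin n) (Fin m) ℝ) : Prop :=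
  (∀ i j, 0 ≤ W i j) ∧ ∀ i, ∑ j, W i j = 1

/-- Relative majorisation of pairs: some channel maps `(p, q)` to `(p', q')`. -/
def RelMaj {n m : ℕ} (p q : Fin n → ℝ) (p' q' : Fin m → ℝ) : Prop :=
  ∃ W : Matrix (Fin n) (Fin m) ℝ, IsStochastic W ∧
    Matrix.vecMul p W = p' ∧ Matrix.vecMul q W = q'

/-- An entropy: a `[0,∞)`-valued function on probability vectors of all finite dimensions
that is monotone under mixing (majorisation), additive for Kronecker products,
and normalised so that `H(u₂) = log 2` (binary logarithm). -/
structure IsEntropy (H : (n : ℕ) → (Fin n → ℝ) → ℝ) : Prop where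
  nonneg : ∀ {n : ℕ} (p : Fin n → ℝ), IsProbVec p → 0 ≤ H n p
  mono : ∀ {n m : ℕ} (p : Fin n → ℝ) (p' : Fin m → ℝ),
    IsProbVec p → IsProbVec p' → Majorizes p p' → H n p ≤ H m p'
  additive : ∀ {n m : ℕ} (p : Fin n → ℝ) (q : Fin m → ℝ),
    IsProbVec p → IsProbVec q → H (n * m) (kron p q) = H n p + H m q
  normalized : H 2 (uniform 2) = Real.logb 2 2

/-- A monotone divergence: a `[0,∞]`-valued function on pairs of probability vectors of
equal finite dimension satisfying the data-processing inequality and `𝔻(1‖1) = 0`. -/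
structure IsMonotoneDivergence (D : (n : ℕ) → (Fin n → ℝ) → (Fin n → ℝ) → ℝ≥0∞) : Prop where
  dpi : ∀ {n m : ℕ} (p q : Fin n → ℝ) (p' q' : Fin m → ℝ),
    IsProbVec p → IsProbVec q → IsProbVec p' → IsProbVec q' →
    RelMaj p q p' q' → D m p' q' ≤ D n p q
  normalized : D 1 (fun _ => 1) (fun _ => 1) = 0

/-- A relative entropy: data-processing inequality, additivity for Kronecker products,
and the normalisation `𝔻(e₁‖u₂) = log 2` (binary logarithm). -/
structure IsRelativeEntropy (D : (n : ℕ) → (Fin n → ℝ) → (Fin n → ℝ) → ℝ≥0∞) : Prop where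
  dpi : ∀ {n m : ℕ} (p q : Fin n → ℝ) (p' q' : Fin m → ℝ),
    IsProbVec p → IsProbVec q → IsProbVec p' → IsProbVec q' →
    RelMaj p q p' q' → D m p' q' ≤ D n p q
  additive : ∀ {n m : ℕ} (p₁ q₁ : Fin n → ℝ) (p₂ q₂ : Fin m → ℝ),
    IsProbVec p₁ → IsProbVec q₁ → IsProbVec p₂ → IsProbVec q₂ →
    D (n * m) (kron p₁ p₂) (kron q₁ q₂) = D n p₁ q₁ + D m p₂ q₂
  normalized : D 2 ![1, 0] ![1/2, 1/2] = ENNReal.ofReal (Real.logb 2 2)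

open Finset Filter Topology

section MaxPartialSum

variable {n : ℕ}

lemma maxPartialSum_le {p : Fin n → ℝ} {k : ℕ} {C : ℝ}
    (h : ∀ s : Finset (Fin n), #s ≤ k → ∑ i ∈ s, p i ≤ C) : maxPartialSum p k ≤ C :=
  csSup_le ⟨0, ∅, by simp, by simp⟩ fun _ ⟨s, hs, hsum⟩ => hsum ▸ h s hs

lemma sum_le_maxPartialSum {p : Fin n → ℝ} (hp : ∀ i, 0 ≤ p i) {s : Finset (Fin n)} {k : ℕ}
    (hs : #s ≤ k) : ∑ i ∈ s, p i ≤ maxPartialSum p k :=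
  le_csSup ⟨∑ i, p i, fun _ ⟨_, _, ht⟩ => ht ▸ sum_le_univ_sum_of_nonneg hp⟩ ⟨s, hs, rfl⟩

lemma exists_card_eq_forall_le (p : Fin n → ℝ) {k : ℕ} (hk : k ≤ n) :
    ∃ T : Finset (Fin n), #T = k ∧ ∀ i ∈ T, ∀ j ∉ T, p j ≤ p i := by
  classical
  obtain ⟨T, hT, hmax⟩ := exists_max_image (powersetCard k (univ : Finset (Fin n)))
    (fun T => ∑ i ∈ T, p i) (powersetCard_nonempty.2 (by simpa using hk))
  refine ⟨T, (mem_powersetCard.1 hT).2, fun i hi j hj => ?_⟩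
  have hswap : insert j (T.erase i) ∈ powersetCard k univ := by
    rw [mem_powersetCard, card_insert_of_notMem (fun h => hj (mem_of_mem_erase h)),
      card_erase_of_mem hi]
    have := card_pos.2 ⟨i, hi⟩
    exact ⟨subset_univ _, by rw [← (mem_powersetCard.1 hT).2]; omega⟩
  have := hmax _ hswap
  rw [sum_insert (fun h => hj (mem_of_mem_erase h)), ← add_sum_erase T p hi] at this
  linarith

lemma sum_mul_le_maxPartialSum {p b : Fin n → ℝ} (hp : ∀ i, 0 ≤ p i)
    (hb : ∀ i, 0 ≤ b i ∧ b i ≤ 1) {k : ℕ} (hbk : ∑ i, b i ≤ k) :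
    ∑ i, p i * b i ≤ maxPartialSum p k := by
  classical
  rcases le_or_gt n k with hnk | hkn
  · calc ∑ i, p i * b i ≤ ∑ i, p i :=
          sum_le_sum fun i _ => mul_le_of_le_one_right (hp i) (hb i).2
      _ ≤ maxPartialSum p k := sum_le_maxPartialSum hp (by simpa using hnk)
  obtain ⟨T, hT, htop⟩ := exists_card_eq_forall_le p hkn.le
  obtain ⟨j₀, hj₀, hmax⟩ := exists_max_image Tᶜ p
    (card_pos.1 (by rw [card_compl, Fintype.card_fin]; omega))
  have hj₀T : j₀ ∉ T := mem_compl.1 hj₀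
  -- `p j₀` separates the entries inside `T` from those outside
  have houtside : ∑ j ∈ Tᶜ, p j * b j ≤ p j₀ * ∑ j ∈ Tᶜ, b j := by
    rw [mul_sum]
    exact sum_le_sum fun j hj => mul_le_mul_of_nonneg_right (hmax j hj) (hb j).1
  have hinside : p j₀ * ∑ i ∈ T, (1 - b i) ≤ ∑ i ∈ T, p i * (1 - b i) := by
    rw [mul_sum]
    exact sum_le_sum fun i hi => mul_le_mul_of_nonneg_right (htop i hi j₀ hj₀T) (by linarith [hb i])
  have hweight : ∑ j ∈ Tᶜ, b j ≤ ∑ i ∈ T, (1 - b i) := by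
    rw [sum_sub_distrib, sum_const, hT, nsmul_one]
    linarith [sum_add_sum_compl T b]
  calc ∑ i, p i * b i = ∑ i ∈ T, p i - ∑ i ∈ T, p i * (1 - b i) + ∑ j ∈ Tᶜ, p j * b j := by
        rw [← sum_add_sum_compl T]; simp only [mul_sub, mul_one, sum_sub_distrib]; ring
    _ ≤ ∑ i ∈ T, p i := by nlinarith [mul_le_mul_of_nonneg_left hweight (hp j₀)]
    _ ≤ maxPartialSum p k := sum_le_maxPartialSum hp hT.le

end MaxPartialSum

section Uniform

variable {n : ℕ}

lemma IsProbVec.card_support_pos {p : Fin n → ℝ} (hp : IsProbVec p) :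
    0 < #{i | p i ≠ 0} :=
  card_pos.2 (nonempty_of_sum_ne_zero (by rw [sum_filter_ne_zero, hp.2]; exact one_ne_zero))

lemma uniform_isProbVec (hn : 0 < n) : IsProbVec (uniform n) :=
  ⟨fun _ => by unfold uniform; positivity, by simp [uniform, (Nat.cast_pos.2 hn).ne']⟩

lemma maxPartialSum_le_min {p : Fin n → ℝ} (hp : IsProbVec p) {a : ℝ} (ha : ∀ i, p i ≤ a)
    (k : ℕ) : maxPartialSum p k ≤ min ((k : ℝ) * a) 1 := by
  obtain ⟨i₀, -⟩ := card_pos.1 hp.card_support_pos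
  refine maxPartialSum_le fun s hs => le_min ?_ ?_
  · calc ∑ i ∈ s, p i ≤ #s * a := by simpa using sum_le_sum fun i (_ : i ∈ s) => ha i
      _ ≤ k * a := by gcongr; exact (hp.1 i₀).trans (ha i₀)
  · simpa [hp.2] using sum_le_univ_sum_of_nonneg (s := s) hp.1

/-- Spreading the budget `k` evenly over the support. -/
lemma min_le_maxPartialSum {p : Fin n → ℝ} (hp : IsProbVec p) (k : ℕ) :
    min ((k : ℝ) / #{i | p i ≠ 0}) 1 ≤ maxPartialSum p k := by
  set x := min ((k : ℝ) / #{i | p i ≠ 0}) 1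
  have hs : (0 : ℝ) < #{i | p i ≠ 0} := Nat.cast_pos.2 hp.card_support_pos
  have hx : 0 ≤ x := le_min (by positivity) zero_le_one
  have key := sum_mul_le_maxPartialSum (b := fun i => if p i ≠ 0 then x else 0) hp.1
    (fun i => by split_ifs; exacts [⟨hx, min_le_right _ _⟩, ⟨le_rfl, zero_le_one⟩]) (k := k) (by
      rw [← sum_filter, sum_const, nsmul_eq_mul]
      calc _ ≤ (#{i | p i ≠ 0} : ℝ) * (k / #{i | p i ≠ 0}) := by gcongr; exact min_le_left _ _
        _ = k := mul_div_cancel₀ _ hs.ne')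
  calc x = ∑ i, p i * x := by rw [← sum_mul, hp.2, one_mul]
    _ = ∑ i, p i * (if p i ≠ 0 then x else 0) :=
        sum_congr rfl fun i _ => by split_ifs with h <;> simp_all
    _ ≤ _ := key

lemma card_support_uniform (hn : 0 < n) : #{i | uniform n i ≠ 0} = n := by
  simp [uniform, (Nat.cast_pos.2 hn).ne']

lemma majorizes_uniform_of_le {p : Fin n → ℝ} (hp : IsProbVec p) {M : ℕ} (hM : 0 < M)
    (hle : ∀ i, p i ≤ 1 / (M : ℝ)) : Majorizes (uniform M) p := fun k =>
  calc maxPartialSum p k ≤ min ((k : ℝ) * (1 / M)) 1 := maxPartialSum_le_min hp hle k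
    _ = min ((k : ℝ) / #{i | uniform M i ≠ 0}) 1 := by rw [card_support_uniform hM, mul_one_div]
    _ ≤ _ := min_le_maxPartialSum (uniform_isProbVec hM) k

lemma majorizes_uniform_card_support {p : Fin n → ℝ} (hp : IsProbVec p) :
    Majorizes p (uniform #{i | p i ≠ 0}) := fun k =>
  calc maxPartialSum (uniform #{i | p i ≠ 0}) k ≤ min ((k : ℝ) * (1 / #{i | p i ≠ 0})) 1 :=
        maxPartialSum_le_min (uniform_isProbVec hp.card_support_pos)
          (fun _ => (one_div _).ge) k
    _ ≤ _ := by rw [mul_one_div]; exact min_le_maxPartialSum hp k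

end Uniform

section Kron

variable {n m : ℕ}

lemma sum_finProdFinEquiv_symm {M : Type*} [AddCommMonoid M] (f : Fin n × Fin m → M) :
    ∑ x, f (finProdFinEquiv.symm x) = ∑ i, ∑ a, f (i, a) := by
  rw [finProdFinEquiv.symm.sum_comp f, Fintype.sum_prod_type]

lemma kron_isProbVec {p : Fin n → ℝ} {q : Fin m → ℝ} (hp : IsProbVec p) (hq : IsProbVec q) :
    IsProbVec (kron p q) :=
  ⟨fun _ => mul_nonneg (hp.1 _) (hq.1 _), by
    simp only [kron, sum_finProdFinEquiv_symm (fun x => p x.1 * q x.2), ← mul_sum, hq.2,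
      mul_one, hp.2]⟩

lemma kron_uniform_uniform : kron (uniform n) (uniform m) = uniform (n * m) := by
  ext x
  simp [kron, uniform, mul_comm]

lemma sum_mul_le_maxPartialSum_kron_uniform {p b : Fin n → ℝ} (hp : ∀ i, 0 ≤ p i)
    (hb : ∀ i, 0 ≤ b i ∧ b i ≤ 1) (hm : 0 < m) {k : ℕ} (hbk : m * ∑ i, b i ≤ k) :
    ∑ i, p i * b i ≤ maxPartialSum (kron p (uniform m)) k := by
  have hm' : (m : ℝ) ≠ 0 := (Nat.cast_pos.2 hm).ne'
  have hsum : ∑ x : Fin (n * m), b (finProdFinEquiv.symm x).1 = m * ∑ i, b i := by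
    rw [sum_finProdFinEquiv_symm (fun y => b y.1)]; simp [mul_sum]
  have hpsum : ∑ x, kron p (uniform m) x * b (finProdFinEquiv.symm x).1 = ∑ i, p i * b i := by
    unfold kron
    rw [sum_finProdFinEquiv_symm (fun y => p y.1 * uniform m y.2 * b y.1)]
    refine sum_congr rfl fun i _ => ?_
    simp only [uniform, sum_const, card_univ, Fintype.card_fin, nsmul_eq_mul]
    field_simp
  rw [← hpsum]
  exact sum_mul_le_maxPartialSum (fun _ => mul_nonneg (hp _) (by unfold uniform; positivity))
    (fun _ => hb _) (hsum ▸ hbk)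

/-- The weight of `q ⊗ uₘ` on a set of cells is `q` weighted by the fraction of each row taken. -/
lemma exists_weights_of_subset (q : Fin n → ℝ) (hm : 0 < m) (S : Finset (Fin (n * m))) :
    ∃ w : Fin n → ℝ, (∀ i, 0 ≤ w i ∧ w i ≤ 1) ∧ m * ∑ i, w i = #S ∧
      ∑ x ∈ S, kron q (uniform m) x = ∑ i, q i * w i := by
  classical
  set row : Fin (n * m) → Fin n := fun x => (finProdFinEquiv.symm x).1
  have hm' : (0 : ℝ) < m := Nat.cast_pos.2 hm
  have hrow : ∀ i, #{x ∈ S | row x = i} ≤ m := fun i => by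
    simpa using card_le_card_of_injOn (fun x => (finProdFinEquiv.symm x).2)
      (fun _ _ => mem_univ _) fun x hx y hy hxy => finProdFinEquiv.symm.injective
        (Prod.ext ((mem_filter.1 hx).2.trans (mem_filter.1 hy).2.symm) hxy)
  refine ⟨fun i => #{x ∈ S | row x = i} / m, fun i => ⟨by positivity, ?_⟩, ?_, ?_⟩
  · rw [div_le_one hm']; exact_mod_cast hrow i
  · rw [← sum_div, mul_div_cancel₀ _ hm'.ne', ← Nat.cast_sum,
      ← card_eq_sum_card_fiberwise fun x _ => mem_univ (row x)]
  · rw [← sum_fiberwise_of_maps_to (g := row) fun x _ => mem_univ _]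
    refine sum_congr rfl fun i _ => ?_
    rw [sum_congr rfl fun x hx => (show kron q (uniform m) x = q i * (m : ℝ)⁻¹ by
      rw [← (mem_filter.1 hx).2]; rfl), sum_const, nsmul_eq_mul]
    ring

end Kron

section Perturbation

variable {n m : ℕ} {p q : Fin n → ℝ} {c μ : ℝ}

/-- Raising `w` towards `1` on the support of `p`, proportionally to the room left there. -/
lemma exists_raise_on_support {p w : Fin n → ℝ} (hμ : ∀ i, p i ≠ 0 → μ ≤ p i)
    (hw : ∀ i, 0 ≤ w i ∧ w i ≤ 1) {s : ℝ} (hs0 : 0 ≤ s)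
    (hs : s < ∑ i, if p i ≠ 0 then 1 - w i else 0) :
    ∃ b : Fin n → ℝ, (∀ i, 0 ≤ b i ∧ b i ≤ 1) ∧ ∑ i, b i ≤ ∑ i, w i + s ∧
      ∑ i, p i * w i + μ * s ≤ ∑ i, p i * b i := by
  set R := ∑ i, if p i ≠ 0 then 1 - w i else 0
  set t := s / R
  have hR0 : 0 < R := hs0.trans_lt hs
  have ht0 : 0 ≤ t := div_nonneg hs0 hR0.le
  have ht1 : t ≤ 1 := (div_le_one hR0).2 hs.le
  have htR : t * R = s := div_mul_cancel₀ _ hR0.ne'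
  refine ⟨fun i => if p i ≠ 0 then w i + t * (1 - w i) else 0, fun i => ?_, ?_, ?_⟩
  · dsimp only
    split_ifs
    · constructor <;> nlinarith [hw i]
    · exact ⟨le_rfl, zero_le_one⟩
  · calc ∑ i, (if p i ≠ 0 then w i + t * (1 - w i) else 0)
          = ∑ i, (if p i ≠ 0 then w i else 0) + t * R := by
            rw [mul_sum, ← sum_add_distrib]
            exact sum_congr rfl fun i _ => by split_ifs <;> ring
      _ ≤ ∑ i, w i + s := by
            rw [htR]; gcongr with i; split_ifs; exacts [le_rfl, (hw i).1]
  · have hgain : μ * R ≤ ∑ i, p i * (1 - w i) := by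
      rw [mul_sum]
      refine sum_le_sum fun i _ => ?_
      split_ifs with h
      · exact mul_le_mul_of_nonneg_right (hμ i h) (by linarith [hw i])
      · simp_all
    calc ∑ i, p i * w i + μ * s = ∑ i, p i * w i + t * (μ * R) := by rw [mul_left_comm, htR]
      _ ≤ ∑ i, p i * w i + t * ∑ i, p i * (1 - w i) := by gcongr
      _ = ∑ i, p i * (if p i ≠ 0 then w i + t * (1 - w i) else 0) := by
          rw [mul_sum, ← sum_add_distrib]
          exact sum_congr rfl fun i _ => by split_ifs <;> simp_all; ring

/-- The budget `(c - 1) ∑ w` is spent on the support of `p`, gaining at least `μ` per unit, which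
pays for `q ≤ p + (c - 1) μ`; if it covers the whole support, `p` contributes its full mass `1`. -/
lemma exists_dilated_weights (hp : IsProbVec p) (hq : IsProbVec q) (hc : 1 ≤ c)
    (hμ : ∀ i, p i ≠ 0 → μ ≤ p i) (hpq : ∀ i, q i ≤ p i + (c - 1) * μ) {w : Fin n → ℝ}
    (hw : ∀ i, 0 ≤ w i ∧ w i ≤ 1) :
    ∃ b : Fin n → ℝ, (∀ i, 0 ≤ b i ∧ b i ≤ 1) ∧ ∑ i, b i ≤ c * ∑ i, w i ∧
      ∑ i, q i * w i ≤ ∑ i, p i * b i := by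
  have hx : 0 ≤ ∑ i, w i := sum_nonneg fun i _ => (hw i).1
  rcases lt_or_ge ((c - 1) * ∑ i, w i) (∑ i, if p i ≠ 0 then 1 - w i else 0) with hR | hR
  · obtain ⟨b, hb, hbw, hpb⟩ := exists_raise_on_support hμ hw (mul_nonneg (by linarith) hx) hR
    refine ⟨b, hb, by linarith, le_trans ?_ hpb⟩
    rw [← mul_assoc, mul_comm μ, mul_sum, ← sum_add_distrib]
    exact sum_le_sum fun i _ => by nlinarith [hpq i, hw i]
  refine ⟨fun i => if p i ≠ 0 then 1 else 0, fun i => by dsimp only; split_ifs <;> norm_num,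
    ?_, ?_⟩
  · calc ∑ i, (if p i ≠ 0 then (1 : ℝ) else 0)
          = (∑ i, if p i ≠ 0 then 1 - w i else 0) + ∑ i, (if p i ≠ 0 then w i else 0) := by
            rw [← sum_add_distrib]; exact sum_congr rfl fun i _ => by split_ifs <;> ring
      _ ≤ (c - 1) * ∑ i, w i + ∑ i, w i := by
            gcongr with i; split_ifs; exacts [le_rfl, (hw i).1]
      _ = c * ∑ i, w i := by ring
  · calc ∑ i, q i * w i ≤ ∑ i, q i :=
          sum_le_sum fun i _ => mul_le_of_le_one_right (hq.1 i) (hw i).2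
      _ = ∑ i, p i := hq.2.trans hp.2.symm
      _ = ∑ i, p i * (if p i ≠ 0 then 1 else 0) :=
            sum_congr rfl fun i _ => by split_ifs <;> simp_all

lemma kron_uniform_majorizes (hp : IsProbVec p) (hq : IsProbVec q) (hc : 1 ≤ c)
    (hμ : ∀ i, p i ≠ 0 → μ ≤ p i) (hpq : ∀ i, q i ≤ p i + (c - 1) * μ) (hm : 0 < m)
    {m' : ℕ} (hcm : c * m ≤ m') : Majorizes (kron p (uniform m)) (kron q (uniform m')) := by
  have hm' : 0 < m' := Nat.cast_pos.1 <| (Nat.cast_pos.2 hm).trans_le (le_mul_of_one_le_left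
    (Nat.cast_nonneg m) hc) |>.trans_le hcm
  refine fun k => maxPartialSum_le fun S hS => ?_
  obtain ⟨w, hw, hwS, hsum⟩ := exists_weights_of_subset q hm' S
  obtain ⟨b, hb, hbw, hqp⟩ := exists_dilated_weights hp hq hc hμ hpq hw
  have hw0 : 0 ≤ ∑ i, w i := sum_nonneg fun i _ => (hw i).1
  rw [hsum]
  refine hqp.trans (sum_mul_le_maxPartialSum_kron_uniform hp.1 hb hm ?_)
  calc m * ∑ i, b i ≤ m * (c * ∑ i, w i) := by gcongr
    _ = c * m * ∑ i, w i := by ring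
    _ ≤ m' * ∑ i, w i := by gcongr
    _ ≤ k := by rw [hwS]; exact_mod_cast hS

end Perturbation

lemma exists_pos_le_of_ne_zero {ι : Type*} [Finite ι] {p : ι → ℝ} (hp : ∀ i, 0 ≤ p i) :
    ∃ μ > 0, ∀ i, p i ≠ 0 → μ ≤ p i := by
  have h : ∀ᶠ μ in 𝓝[>] (0 : ℝ), ∀ i, p i ≠ 0 → μ ≤ p i := eventually_all.2 fun i => by
    by_cases hi : p i = 0
    · exact Eventually.of_forall fun _ h => absurd hi h
    · exact Eventually.mono (nhdsWithin_le_nhds (Iio_mem_nhds ((hp i).lt_of_ne' hi)))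
        fun _ h _ => le_of_lt h
  exact (Eventually.and (self_mem_nhdsWithin : ∀ᶠ μ in 𝓝[>] (0 : ℝ), 0 < μ) h).exists

lemma exists_one_lt_logb_lt {ε : ℝ} (hε : 0 < ε) : ∃ c, 1 < c ∧ Real.logb 2 c < ε :=
  ⟨2 ^ (ε / 2), Real.one_lt_rpow one_lt_two (half_pos hε), by
    rw [Real.logb_rpow two_pos (by norm_num)]; exact half_lt_self hε⟩

namespace IsEntropy

variable {H : (n : ℕ) → (Fin n → ℝ) → ℝ} {n m : ℕ}

lemma entropy_kron_uniform (hH : IsEntropy H) {p : Fin n → ℝ} (hp : IsProbVec p)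
    (hm : 0 < m) : H (n * m) (kron p (uniform m)) = H n p + H m (uniform m) :=
  hH.additive p _ hp (uniform_isProbVec hm)

lemma entropy_uniform_mul (hH : IsEntropy H) (hn : 0 < n) (hm : 0 < m) :
    H (n * m) (uniform (n * m)) = H n (uniform n) + H m (uniform m) := by
  rw [← kron_uniform_uniform, hH.entropy_kron_uniform (uniform_isProbVec hn) hm]

lemma entropy_uniform_one (hH : IsEntropy H) : H 1 (uniform 1) = 0 := by
  have : H 1 (uniform 1) = H 1 (uniform 1) + H 1 (uniform 1) :=
    hH.entropy_uniform_mul one_pos one_pos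
  linarith

lemma entropy_uniform_mono (hH : IsEntropy H) (hn : 0 < n) (hnm : n ≤ m) :
    H n (uniform n) ≤ H m (uniform m) := by
  have hm := hn.trans_le hnm
  refine hH.mono _ _ (uniform_isProbVec hn) (uniform_isProbVec hm)
    (majorizes_uniform_of_le (uniform_isProbVec hm) hn fun _ => ?_)
  rw [uniform, ← one_div]
  gcongr

lemma entropy_uniform_pow (hH : IsEntropy H) (hn : 0 < n) (k : ℕ) :
    H (n ^ k) (uniform (n ^ k)) = k * H n (uniform n) := by
  induction k with
  | zero => simp [hH.entropy_uniform_one]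
  | succ k ih =>
    rw [pow_succ, hH.entropy_uniform_mul (pow_pos hn k) hn, ih]
    push_cast; ring

lemma entropy_uniform (hH : IsEntropy H) (hn : 0 < n) :
    H n (uniform n) = Real.logb 2 n := by
  have h2 : H 2 (uniform 2) = 1 := by rw [hH.normalized, Real.logb_self_eq_one one_lt_two]
  -- both sides lie within `1/k` of `⌊log₂ (n ^ k)⌋ / k`
  have hsqueeze : ∀ k : ℕ, |k * (H n (uniform n) - Real.logb 2 n)| ≤ 1 := fun k => by
    set a := Nat.log 2 (n ^ k)
    have hlo : 2 ^ a ≤ n ^ k := Nat.pow_log_le_self 2 (pow_pos hn k).ne'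
    have hhi : n ^ k ≤ 2 ^ (a + 1) := (Nat.lt_pow_succ_log_self one_lt_two _).le
    have hH_lo := hH.entropy_uniform_mono (pow_pos two_pos a) hlo
    have hH_hi := hH.entropy_uniform_mono (pow_pos hn k) hhi
    rw [hH.entropy_uniform_pow two_pos, hH.entropy_uniform_pow hn, h2] at hH_lo hH_hi
    have hlog_lo := Real.logb_le_logb_of_le one_lt_two (by positivity)
      (show ((2 : ℕ) : ℝ) ^ a ≤ (n : ℝ) ^ k by exact_mod_cast hlo)
    have hlog_hi := Real.logb_le_logb_of_le one_lt_two (by positivity)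
      (show (n : ℝ) ^ k ≤ ((2 : ℕ) : ℝ) ^ (a + 1) by exact_mod_cast hhi)
    simp only [Real.logb_pow, Nat.cast_ofNat, Real.logb_self_eq_one one_lt_two] at hlog_lo hlog_hi
    push_cast at hH_lo hH_hi hlog_lo hlog_hi
    rw [abs_le]; constructor <;> nlinarith
  by_contra hne
  have hpos := abs_pos.2 (sub_ne_zero.2 hne)
  obtain ⟨k, hk⟩ := exists_nat_gt (1 / |H n (uniform n) - Real.logb 2 n|)
  have := hsqueeze k
  rw [abs_mul, Nat.abs_cast] at this
  rw [div_lt_iff₀ hpos] at hk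
  linarith

lemma entropy_le_logb_card_support (hH : IsEntropy H) {p : Fin n → ℝ} (hp : IsProbVec p) :
    H n p ≤ Real.logb 2 #{i | p i ≠ 0} :=
  hH.entropy_uniform hp.card_support_pos ▸ hH.mono _ _ hp
    (uniform_isProbVec hp.card_support_pos) (majorizes_uniform_card_support hp)

lemma entropy_le_logb_dim (hH : IsEntropy H) {p : Fin n → ℝ} (hp : IsProbVec p) :
    H n p ≤ Real.logb 2 n :=
  (hH.entropy_le_logb_card_support hp).trans <| Real.logb_le_logb_of_le one_lt_two
    (Nat.cast_pos.2 hp.card_support_pos) (by simpa using card_filter_le (univ : Finset (Fin n)) _)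

/-- `uₘ'` majorises `p ⊗ uₘ` for `m' = ⌊m / t⌋`, and `log₂ (m' / m) → -log₂ t`. -/
lemma neg_logb_le_entropy (hH : IsEntropy H) {p : Fin n → ℝ} (hp : IsProbVec p) {t : ℝ}
    (hle : ∀ i, p i ≤ t) : -Real.logb 2 t ≤ H n p := by
  obtain ⟨i₀, hi₀⟩ := card_pos.1 hp.card_support_pos
  have ht : 0 < t := ((hp.1 i₀).lt_of_ne' (mem_filter.1 hi₀).2).trans_le (hle i₀)
  have hlim : Tendsto (fun m : ℕ => Real.logb 2 (⌊t⁻¹ * m⌋₊ / m)) atTop (𝓝 (-Real.logb 2 t)) := by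
    rw [← Real.logb_inv]
    exact ((Real.continuousAt_logb (inv_ne_zero ht.ne')).tendsto.comp
      ((tendsto_nat_floor_mul_div_atTop (inv_nonneg.2 ht.le)).comp tendsto_natCast_atTop_atTop))
  refine le_of_tendsto hlim ?_
  filter_upwards [eventually_ge_atTop ⌈t⌉₊, eventually_gt_atTop 0] with m htm hm
  have hm' : (0 : ℝ) < m := Nat.cast_pos.2 hm
  have hM : 0 < ⌊t⁻¹ * m⌋₊ := Nat.floor_pos.2 <| by
    rw [inv_mul_eq_div, one_le_div ht]; exact (Nat.le_ceil t).trans (by exact_mod_cast htm)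
  have hM' : (0 : ℝ) < ⌊t⁻¹ * m⌋₊ := Nat.cast_pos.2 hM
  have hMt : (⌊t⁻¹ * m⌋₊ : ℝ) * t ≤ m :=
    calc _ ≤ t⁻¹ * m * t := by gcongr; exact Nat.floor_le (by positivity)
      _ = m := by field_simp
  have hmaj : Majorizes (uniform ⌊t⁻¹ * m⌋₊) (kron p (uniform m)) :=
    majorizes_uniform_of_le (kron_isProbVec hp (uniform_isProbVec hm)) hM fun x => by
      calc kron p (uniform m) x ≤ t * (m : ℝ)⁻¹ := by
            unfold kron uniform; gcongr; exact hle _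
        _ ≤ 1 / (⌊t⁻¹ * m⌋₊ : ℝ) := by
          rw [le_div_iff₀ hM', ← div_eq_mul_inv, div_mul_eq_mul_div, div_le_one hm', mul_comm]
          exact hMt
  have := hH.mono _ _ (uniform_isProbVec hM) (kron_isProbVec hp (uniform_isProbVec hm)) hmaj
  rw [hH.entropy_kron_uniform hp hm, hH.entropy_uniform hM, hH.entropy_uniform hm] at this
  rw [Real.logb_div hM'.ne' hm'.ne']
  linarith

/-- Majorisation of `p ⊗ uₘ` over `q ⊗ u⌈cm⌉` gives `H p ≤ H q + log₂ (⌈cm⌉ / m)` for all `m`. -/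
lemma entropy_le_add_logb (hH : IsEntropy H) {p q : Fin n → ℝ} (hp : IsProbVec p)
    (hq : IsProbVec q) {c μ : ℝ} (hc : 1 ≤ c) (hμ : ∀ i, p i ≠ 0 → μ ≤ p i)
    (hpq : ∀ i, q i ≤ p i + (c - 1) * μ) : H n p ≤ H n q + Real.logb 2 c := by
  have hc0 : 0 < c := one_pos.trans_le hc
  have hlim : Tendsto (fun m : ℕ => H n q + Real.logb 2 (⌈c * m⌉₊ / m)) atTop
      (𝓝 (H n q + Real.logb 2 c)) :=
    tendsto_const_nhds.add ((Real.continuousAt_logb hc0.ne').tendsto.comp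
      ((tendsto_nat_ceil_mul_div_atTop hc0.le).comp tendsto_natCast_atTop_atTop))
  refine ge_of_tendsto hlim ?_
  filter_upwards [eventually_gt_atTop 0] with m hm
  have hm' : (0 : ℝ) < m := Nat.cast_pos.2 hm
  have hM : (0 : ℝ) < ⌈c * m⌉₊ := (mul_pos hc0 hm').trans_le (Nat.le_ceil _)
  have := hH.mono _ _ (kron_isProbVec hp (uniform_isProbVec hm))
    (kron_isProbVec hq (uniform_isProbVec (Nat.cast_pos.1 hM)))
    (kron_uniform_majorizes hp hq hc hμ hpq hm (Nat.le_ceil _))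
  rw [hH.entropy_kron_uniform hp hm, hH.entropy_kron_uniform hq (Nat.cast_pos.1 hM),
    hH.entropy_uniform hm, hH.entropy_uniform (Nat.cast_pos.1 hM)] at this
  rw [Real.logb_div hM.ne' hm'.ne']
  linarith

lemma eventually_lt_entropy (hH : IsEntropy H) {p : Fin n → ℝ} (hp : IsProbVec p) {α : Type*}
    {l : Filter α} {r : α → Fin n → ℝ} (hr : ∀ᶠ a in l, IsProbVec (r a))
    (hlim : Tendsto r l (𝓝 p)) {b : ℝ} (hb : b < H n p) : ∀ᶠ a in l, b < H n (r a) := by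
  obtain ⟨μ, hμ0, hμ⟩ := exists_pos_le_of_ne_zero hp.1
  obtain ⟨c, hc, hlogc⟩ := exists_one_lt_logb_lt (sub_pos.2 hb)
  filter_upwards [hr, eventually_all.2 fun i => (tendsto_pi_nhds.1 hlim i).eventually_lt_const
    (lt_add_of_pos_right (p i) (mul_pos (sub_pos.2 hc) hμ0))] with a hra hclose
  linarith [hH.entropy_le_add_logb hp hra hc.le hμ fun i => (hclose i).le]

lemma eventually_entropy_lt (hH : IsEntropy H) {p : Fin n → ℝ} (hp : IsProbVec p)
    (hpos : ∀ i, 0 < p i) {α : Type*} {l : Filter α} {r : α → Fin n → ℝ}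
    (hr : ∀ᶠ a in l, IsProbVec (r a)) (hlim : Tendsto r l (𝓝 p)) {b : ℝ} (hb : H n p < b) :
    ∀ᶠ a in l, H n (r a) < b := by
  obtain ⟨μ, hμ0, hμ⟩ := exists_pos_le_of_ne_zero hp.1
  obtain ⟨c, hc, hlogc⟩ := exists_one_lt_logb_lt (sub_pos.2 hb)
  have hδ : 0 < (c - 1) * (μ / 2) := mul_pos (sub_pos.2 hc) (half_pos hμ0)
  filter_upwards [hr, eventually_all.2 fun i => (tendsto_pi_nhds.1 hlim i).eventually_const_lt
      (sub_lt_self (p i) (half_pos hμ0)),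
    eventually_all.2 fun i => (tendsto_pi_nhds.1 hlim i).eventually_const_lt
      (sub_lt_self (p i) hδ)] with a hra hlower hclose
  have hμr : ∀ i, r a i ≠ 0 → μ / 2 ≤ r a i := fun i _ => by
    linarith [hlower i, hμ i (hpos i).ne']
  linarith [hH.entropy_le_add_logb hra hp hc.le hμr fun i => by linarith [hclose i]]

end IsEntropy

open Filter Topology in
/-- an entropy is continuous on `P_{>0}(n)` and lower semi-continuous
everywhere (along sequences in `P_{>0}(n)`), and satisfies
`−log(max_i p_i) ≤ H(p) ≤ log |supp(p)|` (binary logarithm). -/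
theorem stmt13 (H : (n : ℕ) → (Fin n → ℝ) → ℝ) (hH : IsEntropy H) (n : ℕ) :
    ContinuousOn (fun p => H n p) { p : Fin n → ℝ | IsProbVec p ∧ ∀ i, 0 < p i } ∧
    (∀ p : Fin n → ℝ, IsProbVec p → ∀ pk : ℕ → Fin n → ℝ,
      (∀ k, IsProbVec (pk k) ∧ ∀ i, 0 < pk k i) →
      (∀ i, Tendsto (fun k => pk k i) atTop (𝓝 (p i))) →
      H n p ≤ Filter.liminf (fun k => H n (pk k)) atTop) ∧
    ∀ p : Fin n → ℝ, IsProbVec p →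
      -(Real.logb 2 (sSup { x | ∃ i, x = p i })) ≤ H n p ∧
      H n p ≤ Real.logb 2 ((Finset.univ.filter (fun i => p i ≠ 0)).card) := by
  refine ⟨fun p hp => ?_, fun p hp pk hpk hlim => ?_,
    fun p hp => ⟨?_, hH.entropy_le_logb_card_support hp⟩⟩
  · have hr : ∀ᶠ x in 𝓝[{p | IsProbVec p ∧ ∀ i, 0 < p i}] p, IsProbVec x :=
      eventually_nhdsWithin_of_forall fun x hx => hx.1
    have hlim : Tendsto id (𝓝[{p | IsProbVec p ∧ ∀ i, 0 < p i}] p) (𝓝 p) :=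
      tendsto_id.mono_left nhdsWithin_le_nhds
    exact tendsto_order.2 ⟨fun b hb => hH.eventually_lt_entropy hp.1 hr hlim hb,
      fun b hb => hH.eventually_entropy_lt hp.1 hp.2 hr hlim hb⟩
  · have hbdd : IsCoboundedUnder (· ≥ ·) atTop fun k => H n (pk k) :=
      isCoboundedUnder_ge_of_le atTop fun k => hH.entropy_le_logb_dim (hpk k).1
    refine le_of_forall_lt_imp_le_of_dense fun b hb => le_liminf_of_le hbdd ?_
    exact (hH.eventually_lt_entropy hp (.of_forall fun k => (hpk k).1)
      (tendsto_pi_nhds.2 hlim) hb).mono fun _ => le_of_lt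
  · have hbdd : BddAbove { x | ∃ i, x = p i } :=
      (Set.finite_range p).bddAbove.mono fun _ ⟨i, hi⟩ => Set.mem_range.2 ⟨i, hi.symm⟩
    exact hH.neg_logb_le_entropy hp fun i => le_csSup hbdd ⟨i, rfl⟩
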